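/- For every integer N ≥ 1 and every integer m ≥ 0, the rational number 𝐁_N(m) = (∏_{j=1}^μ (α_j m)!)/(∏_{j=1}^η (β_j m)!) is an integer; that is, ∏_{j=1}^η (β_j m)! divides ∏_{j=1}^μ (α_j m)!. -/

import Mathlib

open Finset

/-- The `n`-th harmonic number `H_n = 1 + 1/2 + ⋯ + 1/n`, as a rational (`H_0 = 0`). -/
def harm (n : ℕ) : ℚ := ∑ i ∈ Finset.range n, (1 : ℚ) / (i + 1)

/-- Subsets of the set of distinct prime factors of `N` having even cardinality. -/
def evenSub (N : ℕ) : Finset (Finset ℕ) :=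
  N.primeFactors.powerset.filter fun J => Even J.card

/-- Subsets of the set of distinct prime factors of `N` having odd cardinality. -/
def oddSub (N : ℕ) : Finset (Finset ℕ) :=
  N.primeFactors.powerset.filter fun J => Odd J.card

/-- `∏_{j=1}^μ (α_j m)!`, where the `α_j` are the quotients of `N` by products of evenly
many distinct prime factors of `N`. -/
def Bnum (N m : ℕ) : ℕ :=
  ∏ J ∈ evenSub N, Nat.factorial ((N / ∏ p ∈ J, p) * m)

/-- `∏_{j=1}^η (β_j m)!`, where the `β_j` are the quotients of `N` by products of oddly
many distinct prime factors of `N`, padded with `φ(N)` entries equal to `1` (so that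
`Σ α_j = Σ β_j`). -/
def Bden (N m : ℕ) : ℕ :=
  (∏ J ∈ oddSub N, Nat.factorial ((N / ∏ p ∈ J, p) * m)) * (Nat.factorial m) ^ N.totient

/-- `𝐁_N(m) = (∏ (α_j m)!)/(∏ (β_j m)!)`. -/
noncomputable def BB (N m : ℕ) : ℚ := (Bnum N m : ℚ) / (Bden N m : ℚ)

/-- `𝐁_𝐍(m) = ∏_{j=1}^k 𝐁_{N_j}(m)` for a vector `𝐍 = (N_1, …, N_k)`. -/
noncomputable def BBvec {k : ℕ} (N : Fin k → ℕ) (m : ℕ) : ℚ := ∏ i, BB (N i) m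

/-!
By Legendre's formula, `v_p(n!) = ∑_{i ≥ 1} ⌊n / p^i⌋`, so it suffices (Landau's criterion) to
show `∑_j ⌊β_j m / q⌋ ≤ ∑_j ⌊α_j m / q⌋` for every `q ≥ 1`. Since each `α_j, β_j` divides `N`,
`⌊(N/d) m / q⌋ = ⌊x / d⌋` with `x = ⌊N m / q⌋`, and by inclusion–exclusion over the prime factors
of `N` the difference of the two sums, without the padding, is the number of integers in `(0, x]`
coprime to `N`. That number is at least `φ(N) ⌊x / N⌋ = φ(N) ⌊m / q⌋`, which is exactly the
contribution of the padded entries `β_j = 1`.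
-/

open scoped Nat

theorem Nat.factorization_multiset_prod_apply {B : Multiset ℕ} (hB : 0 ∉ B) (p : ℕ) :
    B.prod.factorization p = (B.map (·.factorization p)).sum := by
  induction B using Multiset.induction_on with
  | empty => simp
  | cons n B ih =>
    rw [Multiset.mem_cons, not_or] at hB
    rw [Multiset.prod_cons, Nat.factorization_mul (Ne.symm hB.1) (Multiset.prod_ne_zero hB.2),
      Finsupp.add_apply, Multiset.map_cons, Multiset.sum_cons, ih hB.2]

theorem Nat.prod_map_factorial_dvd_of_sum_map_div_le {A B : Multiset ℕ}
    (h : ∀ q, 0 < q → (B.map (· / q)).sum ≤ (A.map (· / q)).sum) :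
    (B.map (·!)).prod ∣ (A.map (·!)).prod := by
  have h0 : ∀ C : Multiset ℕ, 0 ∉ C.map (·!) := fun C => by simp [Nat.factorial_ne_zero]
  rw [← Nat.factorization_le_iff_dvd (Multiset.prod_ne_zero (h0 B))
    (Multiset.prod_ne_zero (h0 A)), Finsupp.le_def]
  intro p
  by_cases hp : p.Prime
  · set b := (A + B).sum + 1
    have legendre : ∀ n ∈ A + B, (n)!.factorization p = ∑ i ∈ Ico 1 b, n / p ^ i :=
      fun n hn => Nat.factorization_factorial hp
        ((Nat.log_le_self p n).trans_lt (Nat.lt_succ_of_le (Multiset.le_sum_of_mem hn)))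
    have valuation : ∀ C ≤ A + B, (C.map (·!)).prod.factorization p
        = ∑ i ∈ Ico 1 b, (C.map (· / p ^ i)).sum := fun C hC => by
      rw [Nat.factorization_multiset_prod_apply (h0 C), Multiset.map_map,
        ← Multiset.sum_map_sum]
      exact congrArg _ (Multiset.map_congr rfl fun n hn => legendre n (Multiset.mem_of_le hC hn))
    rw [valuation B (Multiset.le_add_left _ _), valuation A (Multiset.le_add_right _ _)]
    exact sum_le_sum fun i _ => h _ (pow_pos hp.pos i)
  · simp [Nat.factorization_eq_zero_of_not_prime _ hp]

lemma Finset.powerset_filter_prod_dvd {P : Finset ℕ} (hP : ∀ p ∈ P, p.Prime) (a : ℕ) :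
    {J ∈ P.powerset | ∏ p ∈ J, p ∣ a} = {p ∈ P | p ∣ a}.powerset := by
  ext J
  simp only [mem_filter, mem_powerset, subset_iff]
  constructor
  · rintro ⟨hJP, hJa⟩ p hp
    exact ⟨hJP hp, (dvd_prod_of_mem _ hp).trans hJa⟩
  · intro h
    exact ⟨fun p hp => (h hp).1,
      prod_primes_dvd a (fun p hp => (hP p (h hp).1).prime) fun p hp => (h hp).2⟩

lemma Nat.coprime_iff_forall_mem_primeFactors_not_dvd {N a : ℕ} (hN : N ≠ 0) :
    N.Coprime a ↔ ∀ p ∈ N.primeFactors, ¬ p ∣ a := by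
  refine ⟨fun h p hp hpa => ?_, fun h => Nat.coprime_of_dvd fun p hp hpN =>
    h p (mem_primeFactors.mpr ⟨hp, hpN, hN⟩)⟩
  exact ((prime_of_mem_primeFactors hp).coprime_iff_not_dvd.mp
    (h.coprime_dvd_left (dvd_of_mem_primeFactors hp))) hpa

theorem Nat.sum_powerset_primeFactors_neg_one_pow_mul_div {N : ℕ} (hN : N ≠ 0) (x : ℕ) :
    ∑ J ∈ N.primeFactors.powerset, (-1 : ℤ) ^ #J * (x / ∏ p ∈ J, p : ℕ)
      = #{a ∈ Ioc 0 x | N.Coprime a} := by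
  have count_multiples : ∀ J : Finset ℕ, (-1 : ℤ) ^ #J * (x / ∏ p ∈ J, p : ℕ)
      = ∑ a ∈ Ioc 0 x, if ∏ p ∈ J, p ∣ a then (-1 : ℤ) ^ #J else 0 := fun J => by
    rw [← Ioc_filter_dvd_card_eq_div, card_filter, Nat.cast_sum, mul_sum]
    exact sum_congr rfl fun a _ => by split_ifs <;> simp
  have sieve : ∀ a, ∑ J ∈ N.primeFactors.powerset,
      (if ∏ p ∈ J, p ∣ a then (-1 : ℤ) ^ #J else 0) = if N.Coprime a then 1 else 0 := fun a => by
    rw [← sum_filter, powerset_filter_prod_dvd (fun p => prime_of_mem_primeFactors),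
      sum_powerset_neg_one_pow_card]
    simp_rw [filter_eq_empty_iff, coprime_iff_forall_mem_primeFactors_not_dvd hN]
  simp_rw [count_multiples]
  rw [sum_comm, sum_congr rfl fun a _ => sieve a, sum_boole]

lemma Nat.card_filter_coprime_Ico_add_mul (N n k : ℕ) :
    #{a ∈ Ico n (n + N * k) | N.Coprime a} = k * φ N := by
  induction k with
  | zero => simp
  | succ k ih =>
    rw [mul_add_one, ← add_assoc,
      ← Ico_union_Ico_eq_Ico (Nat.le_add_right _ _) (Nat.le_add_right _ _), filter_union,
      card_union_of_disjoint (disjoint_filter_filter (Ico_disjoint_Ico_consecutive _ _ _)),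
      ih, filter_coprime_Ico_eq_totient, add_one_mul]

lemma Nat.totient_mul_div_le_card_filter_coprime_Ioc (N x : ℕ) :
    φ N * (x / N) ≤ #{a ∈ Ioc 0 x | N.Coprime a} := by
  rw [mul_comm, ← card_filter_coprime_Ico_add_mul N 1]
  refine card_le_card (filter_subset_filter _ fun a ha => ?_)
  have := Nat.div_mul_le_self x N
  simp only [mem_Ico, mem_Ioc] at ha ⊢
  constructor <;> nlinarith

lemma sum_evenSub_sub_sum_oddSub (N : ℕ) (f : Finset ℕ → ℤ) :
    ∑ J ∈ evenSub N, f J - ∑ J ∈ oddSub N, f J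
      = ∑ J ∈ N.primeFactors.powerset, (-1) ^ #J * f J := by
  rw [← sum_filter_add_sum_filter_not _ (fun J => Even #J) (fun J => (-1) ^ #J * f J),
    sub_eq_add_neg, ← sum_neg_distrib]
  simp only [Nat.not_even_iff_odd]
  congr 1 <;> refine sum_congr rfl fun J hJ => ?_
  · rw [(mem_filter.mp hJ).2.neg_one_pow, one_mul]
  · rw [(mem_filter.mp hJ).2.neg_one_pow, neg_one_mul]

theorem sum_oddSub_div_add_totient_mul_le_sum_evenSub_div {N : ℕ} (hN : N ≠ 0) (x : ℕ) :
    ∑ J ∈ oddSub N, x / ∏ p ∈ J, p + φ N * (x / N) ≤ ∑ J ∈ evenSub N, x / ∏ p ∈ J, p := by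
  have h := sum_evenSub_sub_sum_oddSub N fun J => (x / ∏ p ∈ J, p : ℕ)
  rw [Nat.sum_powerset_primeFactors_neg_one_pow_mul_div hN, ← Nat.cast_sum, ← Nat.cast_sum] at h
  have := Nat.totient_mul_div_le_card_filter_coprime_Ioc N x
  omega

lemma Nat.div_mul_div_eq_mul_div_div {N d : ℕ} (hd : d ∣ N) (m q : ℕ) :
    N / d * m / q = N * m / q / d := by
  obtain rfl | hd0 := eq_or_ne d 0
  · simp [zero_dvd_iff.mp hd]
  obtain ⟨c, rfl⟩ := hd
  rw [Nat.mul_div_cancel_left c (Nat.pos_of_ne_zero hd0), Nat.div_div_eq_div_mul, mul_assoc,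
    mul_comm q, Nat.mul_div_mul_left _ _ (Nat.pos_of_ne_zero hd0)]

theorem sum_oddSub_mul_div_add_totient_mul_le_sum_evenSub_mul_div {N : ℕ} (hN : N ≠ 0)
    (m q : ℕ) :
    ∑ J ∈ oddSub N, N / (∏ p ∈ J, p) * m / q + φ N * (m / q)
      ≤ ∑ J ∈ evenSub N, N / (∏ p ∈ J, p) * m / q := by
  have hsum : ∀ S ⊆ N.primeFactors.powerset,
      ∑ J ∈ S, N / (∏ p ∈ J, p) * m / q = ∑ J ∈ S, N * m / q / ∏ p ∈ J, p :=
    fun S hS => sum_congr rfl fun J hJ => Nat.div_mul_div_eq_mul_div_div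
      ((prod_dvd_prod_of_subset _ _ _ (mem_powerset.mp (hS hJ))).trans N.prod_primeFactors_dvd) m q
  have hm : m / q = N * m / q / N := by
    simpa [Nat.div_self (Nat.pos_of_ne_zero hN)] using
      Nat.div_mul_div_eq_mul_div_div (dvd_refl N) m q
  rw [hsum (oddSub N) (filter_subset _ _), hsum (evenSub N) (filter_subset _ _), hm]
  exact sum_oddSub_div_add_totient_mul_le_sum_evenSub_div hN _

lemma Bnum_eq_prod_map_factorial (N m : ℕ) :
    Bnum N m = (((evenSub N).val.map fun J => N / (∏ p ∈ J, p) * m).map (·!)).prod := by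
  rw [Bnum, prod_eq_multiset_prod, Multiset.map_map]
  rfl

lemma Bden_eq_prod_map_factorial (N m : ℕ) :
    Bden N m = (((oddSub N).val.map (fun J => N / (∏ p ∈ J, p) * m)
      + Multiset.replicate (φ N) m).map (·!)).prod := by
  rw [Bden, Multiset.map_add, Multiset.prod_add, Multiset.map_replicate, Multiset.prod_replicate,
    prod_eq_multiset_prod, Multiset.map_map]
  rfl

/-- For every `N ≥ 1` and `m ≥ 0`, the rational number
`𝐁_N(m) = (∏_{j=1}^μ (α_j m)!)/(∏_{j=1}^η (β_j m)!)` is an integer: the product of the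
`(β_j m)!` (including the `φ(N)` padded entries `β_j = 1`) divides the product of the
`(α_j m)!`. -/
theorem Bden_dvd_Bnum (N m : ℕ) (hN : 1 ≤ N) : Bden N m ∣ Bnum N m := by
  rw [Bden_eq_prod_map_factorial, Bnum_eq_prod_map_factorial]
  refine Nat.prod_map_factorial_dvd_of_sum_map_div_le fun q _ => ?_
  simp only [Multiset.map_add, Multiset.sum_add, Multiset.map_map, Multiset.map_replicate,
    Multiset.sum_replicate, Function.comp_def, ← sum_eq_multiset_sum, smul_eq_mul]
  exact sum_oddSub_mul_div_add_totient_mul_le_sum_evenSub_mul_div (by omega) m q
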